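/- For every atomic proposition p ∈ 𝒫 and every infinite word σ over 2^𝒫: V(σ,□·◇·p) = (W(σ,□◇p), W(σ,□◇p), W(σ,□◇p), W(σ,◇p)). In particular, V(σ,□·◇·p) can only take the three values 1111 (when □◇p holds on σ), 0001 (when ◇p holds but □◇p does not), and 0000 (when ◇p fails). -/

import Mathlib

/-- Truth values as 4-tuples of Booleans. -/
abbrev TV := Bool × Bool × Bool × Bool

def ttop : TV := (true, true, true, true)
def tbot : TV := (false, false, false, false)

/-- Componentwise order on 4-tuples. -/
def tle (a b : TV) : Prop :=
  a.1 ≤ b.1 ∧ a.2.1 ≤ b.2.1 ∧ a.2.2.1 ≤ b.2.2.1 ∧ a.2.2.2 ≤ b.2.2.2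

instance : DecidableRel tle := fun a b =>
  decidable_of_iff (a.1 ≤ b.1 ∧ a.2.1 ≤ b.2.1 ∧ a.2.2.1 ≤ b.2.2.1 ∧ a.2.2.2 ≤ b.2.2.2) Iff.rfl

def tmeet (a b : TV) : TV :=
  (a.1 && b.1, a.2.1 && b.2.1, a.2.2.1 && b.2.2.1, a.2.2.2 && b.2.2.2)

def tjoin (a b : TV) : TV :=
  (a.1 || b.1, a.2.1 || b.2.1, a.2.2.1 || b.2.2.1, a.2.2.2 || b.2.2.2)

/-- da Costa negation. -/
def tneg (a : TV) : TV := if a = ttop then tbot else ttop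

/-- Residual implication. -/
def timp (a b : TV) : TV := if tle a b then ttop else b

/-- Infimum of a Boolean sequence. -/
noncomputable def bInf (f : ℕ → Bool) : Bool :=
  @decide (∀ i, f i = true) (Classical.propDecidable _)

/-- Supremum of a Boolean sequence. -/
noncomputable def bSup (f : ℕ → Bool) : Bool :=
  @decide (∃ i, f i = true) (Classical.propDecidable _)

/-- Bounded infimum over `i < n`. -/
noncomputable def bInfLt (n : ℕ) (f : ℕ → Bool) : Bool :=
  @decide (∀ i, i < n → f i = true) (Classical.propDecidable _)

/-- Bounded supremum over `i < n`. -/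
noncomputable def bSupLt (n : ℕ) (f : ℕ → Bool) : Bool :=
  @decide (∃ i, i < n ∧ f i = true) (Classical.propDecidable _)

/-- Suffix of an infinite word. -/
def suffix {P : Type} (σ : ℕ → Set P) (i : ℕ) : ℕ → Set P := fun j => σ (i + j)

/-- rLTL(□,◇) formulas. -/
inductive RFormula (P : Type) : Type where
  | atom : P → RFormula P
  | not : RFormula P → RFormula P
  | and : RFormula P → RFormula P → RFormula P
  | or : RFormula P → RFormula P → RFormula P
  | imp : RFormula P → RFormula P → RFormula P
  | always : RFormula P → RFormula P
  | eventually : RFormula P → RFormula P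
  deriving DecidableEq

open scoped Classical in
/-- The 5-valued rLTL semantics. -/
noncomputable def rV {P : Type} : RFormula P → (ℕ → Set P) → TV
  | .atom p, σ => if p ∈ σ 0 then ttop else tbot
  | .not φ, σ => tneg (rV φ σ)
  | .and φ ψ, σ => tmeet (rV φ σ) (rV ψ σ)
  | .or φ ψ, σ => tjoin (rV φ σ) (rV ψ σ)
  | .imp φ ψ, σ => timp (rV φ σ) (rV ψ σ)
  | .always φ, σ =>
      (bInf fun i => (rV φ (suffix σ i)).1,
       bSup fun j => bInf fun i => (rV φ (suffix σ (j + i))).2.1,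
       bInf fun j => bSup fun i => (rV φ (suffix σ (j + i))).2.2.1,
       bSup fun i => (rV φ (suffix σ i)).2.2.2)
  | .eventually φ, σ =>
      (bSup fun i => (rV φ (suffix σ i)).1,
       bSup fun i => (rV φ (suffix σ i)).2.1,
       bSup fun i => (rV φ (suffix σ i)).2.2.1,
       bSup fun i => (rV φ (suffix σ i)).2.2.2)

/-- Projection onto the k-th component. -/
def comp : Fin 4 → TV → Bool
  | 0, a => a.1
  | 1, a => a.2.1
  | 2, a => a.2.2.1
  | 3, a => a.2.2.2

/-- LTL(□,◇) formulas, built from atomic propositions by ¬, ∨, □, ◇. -/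
inductive LFormula (P : Type) : Type where
  | atom : P → LFormula P
  | not : LFormula P → LFormula P
  | or : LFormula P → LFormula P → LFormula P
  | always : LFormula P → LFormula P
  | eventually : LFormula P → LFormula P

/-- Derived conjunction. -/
def LFormula.and {P : Type} (φ ψ : LFormula P) : LFormula P :=
  .not (.or (.not φ) (.not ψ))

/-- Derived implication. -/
def LFormula.imp {P : Type} (φ ψ : LFormula P) : LFormula P :=
  .or (.not φ) ψ

open scoped Classical in
/-- The standard Boolean LTL semantics. -/
noncomputable def lW {P : Type} : LFormula P → (ℕ → Set P) → Bool
  | .atom p, σ => if p ∈ σ 0 then true else false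
  | .not φ, σ => !(lW φ σ)
  | .or φ ψ, σ => lW φ σ || lW ψ σ
  | .always φ, σ => bInf fun i => lW φ (suffix σ i)
  | .eventually φ, σ => bSup fun i => lW φ (suffix σ i)

/-! For `φ = ◇p` every component of `V(σ|i, φ)` is the Boolean `W(σ|i, ◇p)`, and this sequence is
antitone in `i`. For an antitone Boolean sequence, the `liminf` and the `limsup` taken by the second
and third components of `□` both collapse to the infimum, i.e. to `W(σ, □◇p)`; the fourth
component is `W(σ, ◇◇p) = W(σ, ◇p)`. Finally `□◇p` implies `◇p`, which rules out all other
shapes of the tuple. -/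

lemma bSup_eq_true_iff (f : ℕ → Bool) : bSup f = true ↔ ∃ i, f i = true :=
  @decide_eq_true_iff _ (Classical.propDecidable _)

lemma bInf_eq_true_iff (f : ℕ → Bool) : bInf f = true ↔ ∀ i, f i = true :=
  @decide_eq_true_iff _ (Classical.propDecidable _)

section Antitone

variable {f : ℕ → Bool} (hf : Antitone f)
include hf

lemma bSup_bInf_shift_of_antitone : (bSup fun j => bInf fun i => f (j + i)) = bInf f := by
  rw [Bool.eq_iff_iff, bSup_eq_true_iff, bInf_eq_true_iff]
  constructor
  · rintro ⟨j, hj⟩ i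
    rw [bInf_eq_true_iff] at hj
    exact Bool.le_iff_imp.mp (hf (Nat.le_add_left i j)) (hj i)
  · intro h
    exact ⟨0, (bInf_eq_true_iff _).mpr fun i => h (0 + i)⟩

lemma bInf_bSup_shift_of_antitone : (bInf fun j => bSup fun i => f (j + i)) = bInf f := by
  rw [Bool.eq_iff_iff, bInf_eq_true_iff, bInf_eq_true_iff]
  refine forall_congr' fun j => ⟨fun h => ?_, fun h => (bSup_eq_true_iff _).mpr ⟨0, h⟩⟩
  obtain ⟨i, hi⟩ := (bSup_eq_true_iff _).mp h
  exact Bool.le_iff_imp.mp (hf (Nat.le_add_right j i)) hi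

end Antitone

section Suffix

variable {P : Type} (σ : ℕ → Set P)

@[simp]
lemma suffix_zero : suffix σ 0 = σ := by
  funext j
  simp [suffix]

lemma suffix_suffix (i j : ℕ) : suffix (suffix σ i) j = suffix σ (i + j) := by
  funext k
  simp [suffix, add_assoc]

end Suffix

section LTL

variable {P : Type} (ψ : LFormula P) (σ : ℕ → Set P)

lemma lW_eventually_eq_true_iff :
    lW (.eventually ψ) σ = true ↔ ∃ i, lW ψ (suffix σ i) = true :=
  bSup_eq_true_iff _

lemma lW_always_eq_true_iff :
    lW (.always ψ) σ = true ↔ ∀ i, lW ψ (suffix σ i) = true :=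
  bInf_eq_true_iff _

lemma antitone_lW_eventually_suffix : Antitone fun i => lW (.eventually ψ) (suffix σ i) := by
  intro i j hij h
  obtain ⟨k, rfl⟩ := Nat.exists_eq_add_of_le hij
  obtain ⟨m, hm⟩ := (lW_eventually_eq_true_iff _ _).mp h
  rw [suffix_suffix, add_assoc] at hm
  exact (lW_eventually_eq_true_iff _ _).mpr ⟨k + m, by rwa [suffix_suffix]⟩

lemma lW_eventually_eventually : lW (.eventually (.eventually ψ)) σ = lW (.eventually ψ) σ := by
  rw [Bool.eq_iff_iff, lW_eventually_eq_true_iff]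
  constructor
  · rintro ⟨i, hi⟩
    obtain ⟨k, hk⟩ := (lW_eventually_eq_true_iff _ _).mp hi
    rw [suffix_suffix] at hk
    exact (lW_eventually_eq_true_iff _ _).mpr ⟨i + k, hk⟩
  · exact fun h => ⟨0, by rwa [suffix_zero]⟩

lemma lW_always_le : lW (.always ψ) σ ≤ lW ψ σ :=
  Bool.le_iff_imp.mpr fun h => by simpa using (lW_always_eq_true_iff _ _).mp h 0

end LTL

def diag (b : Bool) : TV := (b, b, b, b)

section Robust

variable {P : Type} {φ : RFormula P} {ψ : LFormula P}

lemma rV_atom (p : P) (σ : ℕ → Set P) : rV (.atom p) σ = diag (lW (.atom p) σ) := by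
  unfold rV lW
  split_ifs <;> rfl

lemma rV_eventually (h : ∀ τ, rV φ τ = diag (lW ψ τ)) (σ : ℕ → Set P) :
    rV (.eventually φ) σ = diag (lW (.eventually ψ) σ) := by
  simp only [rV, h, diag]
  rfl

lemma rV_always_of_antitone (h : ∀ τ, rV φ τ = diag (lW ψ τ)) {σ : ℕ → Set P}
    (hanti : Antitone fun i => lW ψ (suffix σ i)) :
    rV (.always φ) σ =
      (lW (.always ψ) σ, lW (.always ψ) σ, lW (.always ψ) σ, lW (.eventually ψ) σ) := by
  simp only [rV, h, diag]
  exact Prod.ext rfl (Prod.ext (bSup_bInf_shift_of_antitone hanti)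
    (Prod.ext (bInf_bSup_shift_of_antitone hanti) rfl))

end Robust

lemma tuple_values_of_le {g e : Bool} (hge : g ≤ e) :
    ((g, g, g, e) = ttop ↔ g = true)
    ∧ ((g, g, g, e) = (false, false, false, true) ↔ (e = true ∧ g = false))
    ∧ ((g, g, g, e) = tbot ↔ e = false) := by
  revert hge
  cases g <;> cases e <;> decide

/-- For every atomic proposition `p` and infinite word `σ`:
`V(σ,□◇p) = (W(σ,□◇p), W(σ,□◇p), W(σ,□◇p), W(σ,◇p))`; in particular `V(σ,□◇p)` can only
take the values `1111` (when `□◇p` holds on `σ`), `0001` (when `◇p` holds but `□◇p` does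
not), and `0000` (when `◇p` fails). -/
theorem robust_GF_on_atom {P : Type} (p : P) (σ : ℕ → Set P) :
    rV (.always (.eventually (.atom p))) σ =
      (lW (.always (.eventually (.atom p))) σ,
       lW (.always (.eventually (.atom p))) σ,
       lW (.always (.eventually (.atom p))) σ,
       lW (.eventually (.atom p)) σ)
    ∧ (rV (.always (.eventually (.atom p))) σ = ttop
        ↔ lW (.always (.eventually (.atom p))) σ = true)
    ∧ (rV (.always (.eventually (.atom p))) σ = (false, false, false, true)
        ↔ (lW (.eventually (.atom p)) σ = true
            ∧ lW (.always (.eventually (.atom p))) σ = false))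
    ∧ (rV (.always (.eventually (.atom p))) σ = tbot
        ↔ lW (.eventually (.atom p)) σ = false) := by
  have hV := rV_always_of_antitone (rV_eventually (rV_atom p))
    (antitone_lW_eventually_suffix (.atom p) σ)
  rw [lW_eventually_eventually] at hV
  rw [hV]
  exact ⟨rfl, tuple_values_of_le (lW_always_le _ σ)⟩
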